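/- arXiv:2406.05759 — 2 statements merged into one kernel-verified Lean document; each statement's English description precedes it below -/
import Mathlib

section
/- Let q > 1 real and let \mu_q be the probability measure on \mathbb{R} with density (1/(2\pi))(q+1)\sqrt{4-x^2}/((q^{-1/2}+q^{1/2})^2-x^2) on [-2,2]. Then for every natural number r, \int X_r d\mu_q = q^{-r/2} if r is even, and 0 if r is odd, where X_r(x) = U_r(x/2). -/
/-!
Relative to the semicircle law `σ(dx) = √(4 - x²) dx / (2π)`, the Kesten–McKay law has density
`(q + 1) / (a² - x²)` with `a = q^{-1/2} + q^{1/2}`. Since `∫ X_r dσ = δ_{r0}`, we get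
`∫ (a² - x²) X_r dμ_q = (q + 1) δ_{r0}`, and `x² X_r = X_{r+2} + 2 X_r + X_{r-2}` turns this into
the recurrence `m_{r+2} = (q + q⁻¹) m_r - m_{r-2}` (`r ≥ 1`) for the moments `m_r = ∫ X_r dμ_q`,
together with `m_2 = (q⁻¹ + 1 + q) m_0 - (q + 1)`. So `k ↦ m_{2k}` lies in the span of `q^k` and
`q^{-k}`; the bound `|X_r| ≤ r + 1` on `[-2, 2]` kills the growing solution, which forces
`m_{2k} = q^{-k} m_0` and then `m_0 = 1`. Odd moments vanish because `μ_q` is symmetric.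
-/

open MeasureTheory
open scoped Real

/-- The Vieta–Fibonacci polynomials as real functions, defined by the recurrence
`X 0 = 1`, `X 1 = x`, `X (r+2) = x * X (r+1) - X r` (so `X r x = U r (x/2)`). -/
noncomputable def vietaFibR : ℕ → ℝ → ℝ
  | 0, _ => 1
  | 1, x => x
  | (r + 2), x => x * vietaFibR (r + 1) x - vietaFibR r x

/-- The Kesten-McKay distribution with real parameter `q > 1`, given by the density
`(1/(2π))(q+1)√(4-x²)/((q^{-1/2}+q^{1/2})² - x²)` on `[-2,2]`. -/
noncomputable def kestenMcKay (q : ℝ) : Measure ℝ :=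
  volume.withDensity fun x =>
    ENNReal.ofReal (if x ∈ Set.Icc (-2 : ℝ) 2 then
      (1 / (2 * π)) * ((q + 1) * Real.sqrt (4 - x ^ 2)) /
        (((Real.sqrt q)⁻¹ + Real.sqrt q) ^ 2 - x ^ 2) else 0)

open Polynomial Polynomial.Chebyshev Real Filter Topology Set

theorem abs_sin_nat_mul_le (n : ℕ) (θ : ℝ) : |sin (n * θ)| ≤ n * |sin θ| := by
  induction n with
  | zero => simp
  | succ n ih =>
    calc |sin ((n + 1 : ℕ) * θ)| = |sin (n * θ) * cos θ + cos (n * θ) * sin θ| := by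
          push_cast; rw [add_mul, one_mul, sin_add]
      _ ≤ |sin (n * θ)| * |cos θ| + |cos (n * θ)| * |sin θ| := by
          rw [← abs_mul, ← abs_mul]; exact abs_add_le _ _
      _ ≤ |sin (n * θ)| * 1 + 1 * |sin θ| := by
          gcongr
          · exact abs_cos_le_one θ
          · exact abs_cos_le_one _
      _ ≤ (n + 1 : ℕ) * |sin θ| := by push_cast; linarith

theorem integral_cos_nat_mul (n : ℕ) : ∫ θ in 0..π, cos (n * θ) = if n = 0 then π else 0 := by
  split_ifs with hn
  · simp [hn]
  · rw [intervalIntegral.integral_comp_mul_left cos (Nat.cast_ne_zero.2 hn)]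
    simp [sin_nat_mul_pi]

theorem integral_mul_sqrt_four_sub_sq {f : ℝ → ℝ} (hf : Continuous f) :
    ∫ x in -2..2, f x * √(4 - x ^ 2) = 4 * ∫ θ in 0..π, f (2 * cos θ) * sin θ ^ 2 := by
  have hderiv : ∀ θ ∈ uIcc π 0, HasDerivAt (fun θ ↦ 2 * cos θ) (-(2 * sin θ)) θ :=
    fun θ _ ↦ by simpa using (hasDerivAt_cos θ).const_mul 2
  have hsqrt {θ : ℝ} (hθ : θ ∈ uIcc 0 π) : √(4 - (2 * cos θ) ^ 2) = 2 * sin θ := by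
    rw [uIcc_of_le pi_pos.le] at hθ
    rw [← sqrt_sq (mul_nonneg zero_le_two (sin_nonneg_of_nonneg_of_le_pi hθ.1 hθ.2))]
    congr 1
    linear_combination -4 * sin_sq_add_cos_sq θ
  calc ∫ x in -2..2, f x * √(4 - x ^ 2)
      = ∫ θ in π..0, f (2 * cos θ) * √(4 - (2 * cos θ) ^ 2) * -(2 * sin θ) := by
        have h := intervalIntegral.integral_comp_mul_deriv (g := fun x ↦ f x * √(4 - x ^ 2))
          hderiv (by fun_prop) (by fun_prop)
        rw [cos_pi, cos_zero, mul_neg_one, mul_one] at h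
        exact h.symm
    _ = ∫ θ in 0..π, 4 * (f (2 * cos θ) * sin θ ^ 2) := by
        rw [intervalIntegral.integral_symm, ← intervalIntegral.integral_neg]
        refine intervalIntegral.integral_congr fun θ hθ ↦ ?_
        simp only [hsqrt hθ]
        ring
    _ = 4 * ∫ θ in 0..π, f (2 * cos θ) * sin θ ^ 2 := intervalIntegral.integral_const_mul _ _

theorem eq_inv_pow_mul_of_tendsto_div_pow {q : ℝ} (hq : q ≠ 0) {v : ℕ → ℝ}
    (hrec : ∀ k, v (k + 2) = (q⁻¹ + q) * v (k + 1) - v k)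
    (hv : Tendsto (fun k ↦ v k / q ^ k) atTop (𝓝 0)) (k : ℕ) : v k = q⁻¹ ^ k * v 0 := by
  -- `w` is multiplied by `q` at each step, so `w k / q ^ k` is constant; it also tends to `0`.
  set w : ℕ → ℝ := fun k ↦ v (k + 1) - q⁻¹ * v k
  have hw (k : ℕ) : w k = q ^ k * w 0 := by
    induction k with
    | zero => simp
    | succ k ih =>
      have hrec' : w (k + 1) = q * w k := by
        simp only [w, hrec]
        field_simp
        ring
      rw [hrec', ih, pow_succ]
      ring
  have hw0 : w 0 = 0 := by
    have hlim := (((tendsto_add_atTop_iff_nat 1).2 hv).const_mul q).sub (hv.const_mul q⁻¹)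
    rw [mul_zero, mul_zero, sub_zero] at hlim
    refine tendsto_nhds_unique tendsto_const_nhds (hlim.congr fun k ↦ ?_)
    have hwk : w 0 = w k / q ^ k := by rw [hw k]; field_simp
    rw [hwk, pow_succ]
    simp only [w]
    field_simp
  induction k with
  | zero => simp
  | succ k ih =>
    have hvk : v (k + 1) = q⁻¹ * v k := sub_eq_zero.1 (show w k = 0 by rw [hw k, hw0, mul_zero])
    rw [hvk, ih, pow_succ']
    ring

theorem tendsto_div_pow_of_abs_le {q C : ℝ} (hq : 1 < q) {v : ℕ → ℝ}
    (hv : ∀ k, |v k| ≤ C * (k + 1)) : Tendsto (fun k ↦ v k / q ^ k) atTop (𝓝 0) := by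
  have hlim : Tendsto (fun k : ℕ ↦ C * (k / q ^ k + (q ^ k)⁻¹)) atTop (𝓝 0) := by
    simpa using ((tendsto_pow_const_div_const_pow_of_one_lt 1 hq).add
      (tendsto_inv_atTop_zero.comp (tendsto_pow_atTop_atTop_of_one_lt hq))).const_mul C
  refine squeeze_zero_norm (fun k ↦ ?_) hlim
  have hqk : 0 < q ^ k := by positivity
  calc ‖v k / q ^ k‖ = |v k| / q ^ k := by rw [norm_div, norm_of_nonneg hqk.le, Real.norm_eq_abs]
    _ ≤ C * (k + 1) / q ^ k := by gcongr; exact hv k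
    _ = C * (k / q ^ k + (q ^ k)⁻¹) := by field_simp

namespace Polynomial.Chebyshev

theorem X_sq_mul_S (R : Type*) [CommRing R] (n : ℤ) :
    X ^ 2 * S R n = S R (n + 2) + 2 * S R n + S R (n - 2) := by
  linear_combination -X * S_add_one R n - S_add_two R n - S_sub_two R n

theorem S_eval_neg {R : Type*} [CommRing R] (n : ℕ) (x : R) :
    (S R n).eval (-x) = (-1) ^ n * (S R n).eval x := by
  induction n using Nat.twoStepInduction with
  | zero => simp
  | one => simp
  | more n ih₁ ih₂ =>
    push_cast at ih₂ ⊢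
    simp only [S_add_two, eval_sub, eval_mul, eval_X, ih₁, ih₂]
    ring

theorem abs_eval_S_le (n : ℕ) {x : ℝ} (hx : x ∈ Icc (-2) 2) : |(S ℝ n).eval x| ≤ n + 1 := by
  suffices Ioo (-2) 2 ⊆ {x : ℝ | |(S ℝ n).eval x| ≤ n + 1} by
    rw [← closure_Ioo (by norm_num : (-2 : ℝ) ≠ 2)] at hx
    exact closure_minimal this (isClosed_le (by fun_prop) continuous_const) hx
  -- On `(-2, 2)` write `x = 2 cos θ` with `sin θ > 0`; the endpoints follow by continuity.
  rintro x ⟨hx₁, hx₂⟩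
  set θ := arccos (x / 2)
  have hcos : 2 * cos θ = x := by
    rw [cos_arccos (by linarith) (by linarith)]; ring
  have hsin : 0 < sin θ := sin_arccos (x / 2) ▸ sqrt_pos.2 (by nlinarith)
  have key := S_two_mul_real_cos θ n
  have hbound := abs_sin_nat_mul_le (n + 1) θ
  rw [hcos] at key
  push_cast at key hbound
  rw [← key, abs_mul, abs_of_pos hsin] at hbound
  exact le_of_mul_le_mul_right hbound hsin

theorem integral_eval_S_mul_sqrt_four_sub_sq (n : ℕ) :
    ∫ x in -2..2, (S ℝ n).eval x * √(4 - x ^ 2) = if n = 0 then 2 * π else 0 := by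
  have hprod (θ : ℝ) :
      (S ℝ n).eval (2 * cos θ) * sin θ ^ 2 = (cos (n * θ) - cos ((n + 2 : ℕ) * θ)) / 2 := by
    have h := S_two_mul_real_cos θ n
    push_cast at h ⊢
    rw [sq, ← mul_assoc, h, show (n + 2 : ℝ) * θ = (n + 1) * θ + θ by ring,
      show (n : ℝ) * θ = (n + 1) * θ - θ by ring, cos_add, cos_sub]
    ring
  rw [integral_mul_sqrt_four_sub_sq (Polynomial.continuous _)]
  simp only [hprod]
  have hcos (m : ℕ) : IntervalIntegrable (fun θ ↦ cos (m * θ)) volume 0 π :=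
    (by fun_prop : Continuous _).intervalIntegrable _ _
  rw [intervalIntegral.integral_div, intervalIntegral.integral_sub (hcos _) (hcos _),
    integral_cos_nat_mul, integral_cos_nat_mul, if_neg (Nat.add_one_ne_zero (n + 1))]
  split_ifs <;> ring

end Polynomial.Chebyshev

theorem vietaFibR_eq_eval_S (r : ℕ) (x : ℝ) : vietaFibR r x = (S ℝ r).eval x := by
  induction r using Nat.twoStepInduction with
  | zero => simp [vietaFibR]
  | one => simp [vietaFibR]
  | more r ih₁ ih₂ =>
    push_cast at ih₂ ⊢
    simp [vietaFibR, ih₁, ih₂]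

section KestenMcKay

variable {q : ℝ}

noncomputable def kestenMcKayDensity (q x : ℝ) : ℝ :=
  (1 / (2 * π)) * ((q + 1) * √(4 - x ^ 2)) / (((√q)⁻¹ + √q) ^ 2 - x ^ 2)

theorem sq_inv_sqrt_add_sqrt (hq : 0 < q) : ((√q)⁻¹ + √q) ^ 2 = q⁻¹ + 2 + q := by
  have hs : √q ≠ 0 := (sqrt_pos.2 hq).ne'
  rw [add_sq, inv_pow, sq_sqrt hq.le, mul_assoc, inv_mul_cancel₀ hs, mul_one]

theorem sq_sub_sq_pos_of_mem_Icc (hq : 1 < q) {x : ℝ} (hx : x ∈ Icc (-2) 2) :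
    0 < ((√q)⁻¹ + √q) ^ 2 - x ^ 2 := by
  have hx2 : x ^ 2 ≤ 4 := by nlinarith [hx.1, hx.2]
  have hq' : 2 < q⁻¹ + q := by
    have : 0 < (q - 1) ^ 2 / q := by positivity
    rw [show (q - 1) ^ 2 / q = q⁻¹ + q - 2 by field_simp; ring] at this
    linarith
  rw [sq_inv_sqrt_add_sqrt (by linarith)]
  linarith

theorem kestenMcKayDensity_nonneg (hq : 1 < q) {x : ℝ} (hx : x ∈ Icc (-2) 2) :
    0 ≤ kestenMcKayDensity q x := by
  have hD := sq_sub_sq_pos_of_mem_Icc hq hx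
  have hq₁ : 0 < q + 1 := by linarith
  unfold kestenMcKayDensity
  positivity

theorem continuousOn_kestenMcKayDensity (hq : 1 < q) :
    ContinuousOn (kestenMcKayDensity q) (Icc (-2) 2) :=
  ContinuousOn.div (by fun_prop) (by fun_prop) fun _ hx ↦ (sq_sub_sq_pos_of_mem_Icc hq hx).ne'

theorem measurable_kestenMcKayDensity (q : ℝ) : Measurable (kestenMcKayDensity q) := by
  unfold kestenMcKayDensity
  fun_prop

theorem kestenMcKayDensity_neg (q x : ℝ) : kestenMcKayDensity q (-x) = kestenMcKayDensity q x := by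
  simp [kestenMcKayDensity]

theorem kestenMcKay_eq_withDensity (q : ℝ) :
    kestenMcKay q = (volume.restrict (Icc (-2) 2)).withDensity
      fun x ↦ ENNReal.ofReal (kestenMcKayDensity q x) := by
  rw [← withDensity_indicator measurableSet_Icc, kestenMcKay]
  congr with x
  by_cases hx : x ∈ Icc (-2 : ℝ) 2 <;> simp [hx, kestenMcKayDensity]

theorem ae_mem_Icc_kestenMcKay (q : ℝ) : ∀ᵐ x ∂kestenMcKay q, x ∈ Icc (-2) 2 := by
  rw [kestenMcKay_eq_withDensity]
  exact (withDensity_absolutelyContinuous _ _).ae_le (ae_restrict_mem measurableSet_Icc)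

theorem integral_kestenMcKay (hq : 1 < q) (f : ℝ → ℝ) :
    ∫ x, f x ∂kestenMcKay q = ∫ x in -2..2, kestenMcKayDensity q x * f x := by
  rw [kestenMcKay_eq_withDensity, integral_withDensity_eq_integral_toReal_smul
    (measurable_kestenMcKayDensity q).ennreal_ofReal
    (ae_of_all _ fun _ ↦ ENNReal.ofReal_lt_top), intervalIntegral.integral_of_le (by norm_num),
    ← integral_Icc_eq_integral_Ioc]
  refine setIntegral_congr_fun measurableSet_Icc fun x hx ↦ ?_
  rw [ENNReal.toReal_ofReal (kestenMcKayDensity_nonneg hq hx), smul_eq_mul]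

theorem integrable_kestenMcKay (hq : 1 < q) {f : ℝ → ℝ} (hf : Continuous f) :
    Integrable f (kestenMcKay q) := by
  rw [kestenMcKay_eq_withDensity, integrable_withDensity_iff
    (measurable_kestenMcKayDensity q).ennreal_ofReal
    (ae_of_all _ fun _ ↦ ENNReal.ofReal_lt_top)]
  refine ContinuousOn.integrableOn_Icc ((hf.continuousOn.mul
    (continuousOn_kestenMcKayDensity hq)).congr fun x hx ↦ ?_)
  rw [ENNReal.toReal_ofReal (kestenMcKayDensity_nonneg hq hx), Pi.mul_apply]

theorem integral_comp_neg_kestenMcKay (hq : 1 < q) (f : ℝ → ℝ) :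
    ∫ x, f (-x) ∂kestenMcKay q = ∫ x, f x ∂kestenMcKay q := by
  simp only [integral_kestenMcKay hq]
  simpa [kestenMcKayDensity_neg] using
    intervalIntegral.integral_comp_neg (a := -2) (b := 2) fun x ↦ kestenMcKayDensity q x * f x

theorem integral_sq_sub_sq_mul_kestenMcKay (hq : 1 < q) (f : ℝ → ℝ) :
    ∫ x, (((√q)⁻¹ + √q) ^ 2 - x ^ 2) * f x ∂kestenMcKay q
      = (q + 1) / (2 * π) * ∫ x in -2..2, f x * √(4 - x ^ 2) := by
  rw [integral_kestenMcKay hq, ← intervalIntegral.integral_const_mul]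
  refine intervalIntegral.integral_congr fun x hx ↦ ?_
  rw [uIcc_of_le (by norm_num)] at hx
  have hD := (sq_sub_sq_pos_of_mem_Icc hq hx).ne'
  simp only [kestenMcKayDensity]
  generalize ((√q)⁻¹ + √q) ^ 2 - x ^ 2 = D at hD ⊢
  field_simp

theorem integral_sq_sub_sq_mul_eval_S_kestenMcKay (hq : 1 < q) (n : ℕ) :
    ∫ x, (((√q)⁻¹ + √q) ^ 2 - x ^ 2) * (S ℝ n).eval x ∂kestenMcKay q
      = if n = 0 then q + 1 else 0 := by
  rw [integral_sq_sub_sq_mul_kestenMcKay hq, integral_eval_S_mul_sqrt_four_sub_sq]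
  split_ifs
  · field_simp
  · rw [mul_zero]

theorem integral_eval_S_kestenMcKay_recurrence (hq : 1 < q) (n : ℕ) :
    (q⁻¹ + q) * ∫ x, (S ℝ n).eval x ∂kestenMcKay q - ∫ x, (S ℝ (n + 2)).eval x ∂kestenMcKay q
      - ∫ x, (S ℝ (n - 2)).eval x ∂kestenMcKay q = if n = 0 then q + 1 else 0 := by
  have hS (m : ℤ) : Integrable (fun x ↦ (S ℝ m).eval x) (kestenMcKay q) :=
    integrable_kestenMcKay hq (Polynomial.continuous _)
  have hpt (x : ℝ) : (((√q)⁻¹ + √q) ^ 2 - x ^ 2) * (S ℝ n).eval x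
      = (q⁻¹ + q) * (S ℝ n).eval x - (S ℝ (n + 2)).eval x - (S ℝ (n - 2)).eval x := by
    have h := congrArg (eval x) (X_sq_mul_S ℝ n)
    simp only [eval_mul, eval_pow, eval_X, eval_add, eval_ofNat] at h
    rw [sq_inv_sqrt_add_sqrt (by linarith)]
    linear_combination -h
  rw [← integral_sq_sub_sq_mul_eval_S_kestenMcKay hq n, funext hpt,
    integral_sub ?_ (hS _), integral_sub ((hS _).const_mul _) (hS _), integral_const_mul]
  exact ((hS _).const_mul _).sub (hS _)

theorem abs_integral_eval_S_kestenMcKay_le (hq : 1 < q) (n : ℕ) :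
    |∫ x, (S ℝ n).eval x ∂kestenMcKay q| ≤ (n + 1) * (kestenMcKay q).real univ := by
  calc |∫ x, (S ℝ n).eval x ∂kestenMcKay q| = ‖∫ x, (S ℝ n).eval x ∂kestenMcKay q‖ := rfl
    _ ≤ ∫ _, (n + 1 : ℝ) ∂kestenMcKay q :=
        norm_integral_le_of_norm_le (integrable_kestenMcKay hq continuous_const)
          ((ae_mem_Icc_kestenMcKay q).mono fun _ hx ↦ abs_eval_S_le n hx)
    _ = (n + 1) * (kestenMcKay q).real univ := by rw [integral_const, smul_eq_mul, mul_comm]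

theorem integral_eval_S_odd_kestenMcKay (hq : 1 < q) {n : ℕ} (hn : Odd n) :
    ∫ x, (S ℝ n).eval x ∂kestenMcKay q = 0 := by
  have h := integral_comp_neg_kestenMcKay hq fun x ↦ (S ℝ n).eval x
  simp only [S_eval_neg, hn.neg_one_pow, neg_one_mul, integral_neg] at h
  linarith

theorem integral_eval_S_two_mul_kestenMcKay (hq : 1 < q) (k : ℕ) :
    ∫ x, (S ℝ (2 * k : ℕ)).eval x ∂kestenMcKay q = q⁻¹ ^ k := by
  set v : ℕ → ℝ := fun k ↦ ∫ x, (S ℝ (2 * k : ℕ)).eval x ∂kestenMcKay q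
  have hrec (k : ℕ) : v (k + 2) = (q⁻¹ + q) * v (k + 1) - v k := by
    have h := integral_eval_S_kestenMcKay_recurrence hq (2 * (k + 1))
    rw [if_neg (by omega)] at h
    simp only [v]
    push_cast at h ⊢
    rw [show 2 * ((k : ℤ) + 1) + 2 = 2 * (k + 2) by ring,
      show 2 * ((k : ℤ) + 1) - 2 = 2 * k by ring] at h
    linarith
  have hv : Tendsto (fun k ↦ v k / q ^ k) atTop (𝓝 0) := by
    refine tendsto_div_pow_of_abs_le hq (C := 2 * (kestenMcKay q).real univ) fun k ↦ ?_
    have hbound : |v k| ≤ ((2 * k : ℕ) + 1) * (kestenMcKay q).real univ :=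
      abs_integral_eval_S_kestenMcKay_le hq (2 * k)
    have hM : 0 ≤ (kestenMcKay q).real univ := measureReal_nonneg
    push_cast at hbound
    nlinarith
  have hgeom := eq_inv_pow_mul_of_tendsto_div_pow (by positivity) hrec hv
  -- The relation at `n = 0` reads `(q⁻¹ + 1 + q) v 0 - v 1 = q + 1`, and `v 1 = q⁻¹ v 0`.
  have hv0 : v 0 = 1 := by
    have h := integral_eval_S_kestenMcKay_recurrence hq 0
    have h1 : v 1 = ∫ x, (S ℝ 2).eval x ∂kestenMcKay q := rfl
    have h0 : v 0 = ∫ x, (S ℝ 0).eval x ∂kestenMcKay q := rfl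
    have hneg : ∫ x, (S ℝ (-2)).eval x ∂kestenMcKay q = -v 0 := by simp [v]
    rw [if_pos rfl, Nat.cast_zero, zero_add, zero_sub, hneg, ← h0, ← h1, hgeom 1] at h
    exact mul_left_cancel₀ (by linarith : q + 1 ≠ 0) (by linear_combination h)
  exact (hgeom k).trans (by rw [hv0, mul_one])

end KestenMcKay

theorem integral_vietaFib_kestenMcKay (q : ℝ) (hq : 1 < q) (r : ℕ) :
    ∫ x, vietaFibR r x ∂kestenMcKay q = if Even r then ((Real.sqrt q)⁻¹) ^ r else 0 := by
  simp only [vietaFibR_eq_eval_S]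
  split_ifs with hr
  · obtain ⟨k, rfl⟩ := hr.two_dvd
    rw [integral_eval_S_two_mul_kestenMcKay hq, pow_mul, inv_pow (√q), sq_sqrt (by linarith)]
  · exact integral_eval_S_odd_kestenMcKay hq (Nat.not_even_iff_odd.1 hr)
end

section
/- Let G be a finite (q+1)-regular graph, let f_r be the number of closed non-backtracking walks of length r and c_r the number of circuits of length r (closed non-backtracking walks whose last edge is also not the reverse of the first edge). Then for r \ge 1: f_r = c_r + (q-1)\sum_{1 \le i < r/2} q^{i-1} c_{r-2i}. -/
open SimpleGraph

/-- The number of closed non-backtracking walks of length `r` based at `a` in `G`. -/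
noncomputable def closedNbWalkCount {V : Type*} (G : SimpleGraph V) (r : ℕ) (a : V) : ℕ :=
  Nat.card {p : G.Walk a a //
    p.length = r ∧ List.Chain' (fun d₁ d₂ => d₂ ≠ d₁.symm) p.darts}

/-- The number of circuits of length `r` based at `a` in `G`: closed non-backtracking
walks such that, additionally, the first dart is not the reverse of the last dart
(the wrap-around non-backtracking condition, encoded by appending the first dart
to the end of the dart list). -/
noncomputable def circuitCount {V : Type*} (G : SimpleGraph V) (r : ℕ) (a : V) : ℕ :=
  Nat.card {p : G.Walk a a //
    p.length = r ∧ List.Chain' (fun d₁ d₂ => d₂ ≠ d₁.symm) (p.darts ++ p.darts.take 1)}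

/-!
A closed non-backtracking walk that is not a circuit begins with a dart `a → b` and ends with
its reverse, so it is `a → b`, then a closed walk `w` at `b` two steps shorter, then `b → a`.
Conversely such a walk is non-backtracking exactly when `w` is non-empty and non-backtracking
and `a` differs from the second and the penultimate vertex of `w`. Those two vertices coincide
exactly when `w` is not a circuit, so by `(q + 1)`-regularity a circuit of length `m ≥ 1`
acquires such a tail in `q - 1` ways and every other closed non-backtracking walk in `q` ways.
Hence `t r = f r - c r` satisfies `t (m + 2) = (q - 1) c m + q t m` for `m ≥ 1`, and `t r = 0`
for `r ≤ 2`; unrolling the recurrence gives the formula.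
-/

theorem eq_mul_sum_range_of_recurrence {R : Type*} [CommSemiring R] (p q : R) (t c : ℕ → R)
    (h_lt : ∀ n < 3, t n = 0)
    (hrec : ∀ m, t (m + 3) = p * c (m + 1) + q * t (m + 1)) :
    ∀ r, t r = p * ∑ k ∈ Finset.range ((r - 1) / 2), q ^ k * c (r - 2 - 2 * k)
  | 0 | 1 | 2 => by simp [h_lt]
  | m + 3 => by
    have hsum : ∑ k ∈ Finset.range ((m + 3 - 1) / 2), q ^ k * c (m + 3 - 2 - 2 * k) =
        c (m + 1) +
          q * ∑ k ∈ Finset.range ((m + 1 - 1) / 2), q ^ k * c (m + 1 - 2 - 2 * k) := by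
      rw [show (m + 3 - 1) / 2 = (m + 1 - 1) / 2 + 1 by omega, Finset.sum_range_succ',
        Finset.mul_sum, add_comm]
      congr 1
      · simp
      · refine Finset.sum_congr rfl fun k _ => ?_
        rw [pow_succ', show m + 3 - 2 - 2 * (k + 1) = m + 1 - 2 - 2 * k by omega, mul_assoc]
    rw [hrec, eq_mul_sum_range_of_recurrence p q t c h_lt hrec (m + 1), hsum]
    ring

theorem eq_mul_sum_Ico_of_recurrence {R : Type*} [CommSemiring R] (p q : R) (t c : ℕ → R)
    (h_lt : ∀ n < 3, t n = 0)
    (hrec : ∀ m, t (m + 3) = p * c (m + 1) + q * t (m + 1)) (r : ℕ) :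
    t r = p * ∑ i ∈ Finset.Ico 1 ((r + 1) / 2), q ^ (i - 1) * c (r - 2 * i) := by
  rw [eq_mul_sum_range_of_recurrence p q t c h_lt hrec, Finset.sum_Ico_eq_sum_range,
    show (r + 1) / 2 - 1 = (r - 1) / 2 by omega]
  congr 1
  refine Finset.sum_congr rfl fun k _ => ?_
  rw [Nat.add_sub_cancel_left, Nat.sub_sub, mul_add, mul_one]

open Classical in
theorem Set.sum_ite_mem_of_subset {α : Type*} {s t : Set α} [Fintype s] (hts : t ⊆ s)
    (x y : ℕ) :
    ∑ i : s, (if (i : α) ∈ t then x else y) = x * t.ncard + y * (s \ t).ncard := by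
  rw [Finset.sum_ite, Finset.sum_const, Finset.sum_const, smul_eq_mul, smul_eq_mul,
    mul_comm, mul_comm _ y, ← Fintype.card_subtype, ← Fintype.card_subtype,
    ← Nat.card_eq_fintype_card, ← Nat.card_eq_fintype_card,
    Nat.card_congr (Equiv.subtypeSubtypeEquivSubtype fun h => hts h),
    Nat.card_congr (Equiv.subtypeSubtypeEquivSubtypeInter (· ∈ s) (· ∉ t))]
  rfl

namespace SimpleGraph

variable {V : Type*} {G : SimpleGraph V}

def IsNonBacktracking (l : List G.Dart) : Prop :=
  l.IsChain fun d₁ d₂ => d₂ ≠ d₁.symm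

-- `closedNbWalkCount G n a` and `circuitCount G n a` are, by definition, the cardinalities of
-- the following two sets.
def closedNbWalkSet (G : SimpleGraph V) (n : ℕ) (a : V) : Set (G.Walk a a) :=
  {p | p.length = n ∧ IsNonBacktracking p.darts}

def circuitSet (G : SimpleGraph V) (n : ℕ) (a : V) : Set (G.Walk a a) :=
  {p | p.length = n ∧ IsNonBacktracking (p.darts ++ p.darts.take 1)}

namespace Walk

variable {a b : V}

def withTail (h : G.Adj a b) (w : G.Walk b b) : G.Walk a a :=
  cons h (w.concat h.symm)

@[simp]
theorem length_withTail (h : G.Adj a b) (w : G.Walk b b) :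
    (withTail h w).length = w.length + 2 := by
  simp [withTail]

@[simp]
theorem darts_withTail (h : G.Adj a b) (w : G.Walk b b) :
    (withTail h w).darts = ⟨(a, b), h⟩ :: (w.darts ++ [⟨(b, a), h.symm⟩]) := by
  simp [withTail, darts_concat]

theorem head?_darts {u v : V} {w : G.Walk u v} (hw : ¬ w.Nil) :
    w.darts.head? = some (w.firstDart hw) := by
  rw [List.head?_eq_some_head (darts_eq_nil.not.mpr hw), head_darts_eq_firstDart]

theorem getLast?_darts {u v : V} {w : G.Walk u v} (hw : ¬ w.Nil) :
    w.darts.getLast? = some (w.lastDart hw) := by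
  rw [List.getLast?_eq_some_getLast (darts_eq_nil.not.mpr hw), getLast_darts_eq_lastDart]

theorem isNonBacktracking_darts_withTail_iff (h : G.Adj a b) (w : G.Walk b b) :
    IsNonBacktracking (withTail h w).darts ↔
      ¬ w.Nil ∧ IsNonBacktracking w.darts ∧ w.snd ≠ a ∧ w.penultimate ≠ a := by
  by_cases hw : w.Nil
  · rw [eq_nil_iff_nil.mpr hw]
    simp [IsNonBacktracking, Dart.symm]
  · rw [darts_withTail, IsNonBacktracking, List.isChain_cons, List.isChain_append,
      List.head?_append, head?_darts hw, getLast?_darts hw]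
    simp only [Option.some_or, Option.mem_some_iff, forall_eq', List.head?_cons,
      List.isChain_singleton, true_and]
    simp only [Dart.symm_mk, Prod.swap_prod_mk, ne_eq, Dart.ext_iff, firstDart_toProd, eq_comm,
      Prod.mk.injEq, true_and, Dart.symm_toProd, lastDart_toProd, hw, not_false_eq_true,
      IsNonBacktracking]
    tauto

theorem not_isNonBacktracking_darts_withTail_append_take_one (h : G.Adj a b) (w : G.Walk b b) :
    ¬ IsNonBacktracking ((withTail h w).darts ++ (withTail h w).darts.take 1) := by
  intro hnb
  simpa [IsNonBacktracking] using hnb.rel_getLast_head_of_append (List.cons_ne_nil _ _)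
    (List.cons_ne_nil _ _)

theorem isNonBacktracking_darts_append_take_one_iff {p : G.Walk a a} (hp : ¬ p.Nil) :
    IsNonBacktracking (p.darts ++ p.darts.take 1) ↔
      IsNonBacktracking p.darts ∧ p.penultimate ≠ p.snd := by
  rw [List.take_one, head?_darts hp, IsNonBacktracking, List.isChain_append, getLast?_darts hp]
  simp only [Option.toList_some, Option.mem_some_iff, forall_eq', List.head?_cons,
    List.isChain_singleton, true_and]
  simp only [ne_eq, Dart.ext_iff, Dart.symm_toProd, firstDart_toProd, lastDart_toProd,
    Prod.swap_prod_mk, Prod.mk.injEq, true_and, IsNonBacktracking, eq_comm]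

theorem exists_eq_withTail {p : G.Walk a a} (hp : ¬ p.Nil) (hps : p.penultimate = p.snd) :
    ∃ (b : V) (h : G.Adj a b) (w : G.Walk b b), p = withTail h w := by
  cases p with
  | nil => exact absurd Nil.nil hp
  | cons h q =>
    cases q with
    | nil => exact (G.irrefl h).elim
    | cons h₂ q₂ =>
      obtain ⟨x, w, h', hw⟩ := exists_cons_eq_concat h₂ q₂
      rw [penultimate_cons_cons, hw, penultimate_concat, snd_cons] at hps
      subst hps
      exact ⟨_, h, w, by rw [hw]; rfl⟩

def tailStarts (w : G.Walk b b) : Set V :=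
  {a | ∃ h : G.Adj a b, IsNonBacktracking (withTail h w).darts}

theorem tailStarts_eq {w : G.Walk b b} (hw : ¬ w.Nil) (hnb : IsNonBacktracking w.darts) :
    w.tailStarts = G.neighborSet b \ {w.snd, w.penultimate} := by
  ext a
  simp only [tailStarts, isNonBacktracking_darts_withTail_iff, hw, hnb, Set.mem_ofPred_eq,
    Set.mem_sdiff, mem_neighborSet, Set.mem_insert_iff, Set.mem_singleton_iff, not_false_eq_true,
    true_and, exists_prop, not_or, G.adj_comm b a, ne_comm (a := a)]

end Walk

open Walk

theorem circuitSet_subset_closedNbWalkSet (n : ℕ) (a : V) :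
    G.circuitSet n a ⊆ G.closedNbWalkSet n a :=
  fun _ hp => ⟨hp.1, hp.2.left_of_append⟩

theorem finite_closedNbWalkSet [G.LocallyFinite] (n : ℕ) (a : V) :
    (G.closedNbWalkSet n a).Finite := by
  classical
  exact (Set.toFinite {p : G.Walk a a | p.length = n}).subset fun _ hp => hp.1

instance [G.LocallyFinite] (n : ℕ) (a : V) : Finite (G.closedNbWalkSet n a) :=
  (finite_closedNbWalkSet n a).to_subtype

theorem exists_eq_withTail_of_mem_diff {n : ℕ} {a : V} {p : G.Walk a a}
    (hp : p ∈ G.closedNbWalkSet n a \ G.circuitSet n a) :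
    ∃ (b : V) (h : G.Adj a b) (w : G.Walk b b), p = withTail h w := by
  obtain ⟨⟨hlen, hnb⟩, hnc⟩ := hp
  have hnil : ¬ p.Nil := by
    rintro hnil
    obtain rfl := eq_nil_iff_nil.mpr hnil
    exact hnc ⟨hlen, by simp [IsNonBacktracking]⟩
  refine exists_eq_withTail hnil ?_
  by_contra hps
  exact hnc ⟨hlen, (isNonBacktracking_darts_append_take_one_iff hnil).mpr ⟨hnb, hps⟩⟩

theorem closedNbWalkSet_diff_circuitSet_eq_empty {n : ℕ} (hn : n < 3) (a : V) :
    G.closedNbWalkSet n a \ G.circuitSet n a = ∅ := by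
  refine Set.eq_empty_of_forall_notMem fun p hp => ?_
  obtain ⟨b, h, w, rfl⟩ := exists_eq_withTail_of_mem_diff hp
  have hw := ((isNonBacktracking_darts_withTail_iff h w).mp hp.1.2).1
  have := hp.1.1
  rw [length_withTail] at this
  rw [← length_eq_zero_iff] at hw
  omega

open Classical in
theorem ncard_tailStarts [G.LocallyFinite] {q : ℕ} (hreg : G.IsRegularOfDegree (q + 1))
    {m : ℕ} {b : V} {w : G.Walk b b} (hw : w ∈ G.closedNbWalkSet (m + 1) b) :
    w.tailStarts.ncard = if w ∈ G.circuitSet (m + 1) b then q - 1 else q := by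
  have hnil : ¬ w.Nil := by simp [← length_eq_zero_iff, hw.1]
  have hsub : {w.snd, w.penultimate} ⊆ G.neighborSet b := Set.insert_subset_iff.mpr
    ⟨adj_snd hnil, Set.singleton_subset_iff.mpr (adj_penultimate hnil).symm⟩
  have hcirc : w ∈ G.circuitSet (m + 1) b ↔ w.penultimate ≠ w.snd := by
    simp [circuitSet, hw.1, isNonBacktracking_darts_append_take_one_iff hnil, hw.2]
  rw [tailStarts_eq hnil hw.2, Set.ncard_sdiff hsub, ← coe_neighborFinset, Set.ncard_coe_finset,
    card_neighborFinset_eq_degree, hreg b, hcirc]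
  split_ifs with h
  · rw [Set.ncard_pair (Ne.symm h)]
    omega
  · rw [not_not.mp h, Set.pair_eq_singleton, Set.ncard_singleton]
    omega

def withTailSigma (m : ℕ) :
    (Σ b : V, Σ w : G.closedNbWalkSet m b, (w : G.Walk b b).tailStarts) →
      Σ a : V, ↥(G.closedNbWalkSet (m + 2) a \ G.circuitSet (m + 2) a)
  | ⟨_, w, a, ha⟩ =>
    ⟨a, withTail ha.1 w, ⟨by simp [w.2.1], ha.2⟩,
      fun hc => not_isNonBacktracking_darts_withTail_append_take_one ha.1 w hc.2⟩

theorem withTailSigma_bijective (m : ℕ) : (withTailSigma (G := G) m).Bijective := by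
  constructor
  · rintro ⟨b, w, a, ha⟩ ⟨b', w', a', ha'⟩ heq
    obtain ⟨rfl, heq⟩ := Sigma.mk.inj_iff.mp heq
    have := congrArg Subtype.val (eq_of_heq heq)
    simp only [withTail, cons.injEq] at this
    obtain ⟨rfl, hconcat⟩ := this
    obtain ⟨_, hww'⟩ := concat_inj (eq_of_heq hconcat)
    obtain rfl : w = w' := Subtype.ext hww'
    rfl
  · rintro ⟨a, p, hp⟩
    obtain ⟨b, h, w, rfl⟩ := exists_eq_withTail_of_mem_diff hp
    have hnb := (isNonBacktracking_darts_withTail_iff h w).mp hp.1.2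
    have hlen : w.length = m := by simpa using hp.1.1
    exact ⟨⟨b, ⟨w, hlen, hnb.2.1⟩, a, h, hp.1.2⟩, rfl⟩

theorem card_sigma_tailStarts [G.LocallyFinite] [Finite V] {q : ℕ}
    (hreg : G.IsRegularOfDegree (q + 1)) (m : ℕ) (b : V) :
    Nat.card (Σ w : G.closedNbWalkSet (m + 1) b, (w : G.Walk b b).tailStarts) =
      (q - 1) * (G.circuitSet (m + 1) b).ncard +
        q * (G.closedNbWalkSet (m + 1) b \ G.circuitSet (m + 1) b).ncard := by
  have := Fintype.ofFinite (G.closedNbWalkSet (m + 1) b)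
  rw [Nat.card_sigma]
  simp only [Nat.card_coe_set_eq]
  rw [Finset.sum_congr rfl fun w _ => ncard_tailStarts hreg w.2,
    Set.sum_ite_mem_of_subset (circuitSet_subset_closedNbWalkSet _ _)]

theorem sum_ncard_diff_circuitSet_add_three [Fintype V] [G.LocallyFinite] {q : ℕ}
    (hreg : G.IsRegularOfDegree (q + 1)) (m : ℕ) :
    ∑ a, (G.closedNbWalkSet (m + 3) a \ G.circuitSet (m + 3) a).ncard =
      (q - 1) * ∑ a, (G.circuitSet (m + 1) a).ncard +
        q * ∑ a, (G.closedNbWalkSet (m + 1) a \ G.circuitSet (m + 1) a).ncard := by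
  calc ∑ a, (G.closedNbWalkSet (m + 3) a \ G.circuitSet (m + 3) a).ncard
      = Nat.card (Σ a : V, ↥(G.closedNbWalkSet (m + 3) a \ G.circuitSet (m + 3) a)) := by
        simp only [Nat.card_sigma, Nat.card_coe_set_eq]
    _ = Nat.card (Σ b : V, Σ w : G.closedNbWalkSet (m + 1) b, (w : G.Walk b b).tailStarts) :=
        (Nat.card_eq_of_bijective _ (withTailSigma_bijective (m + 1))).symm
    _ = _ := by
      rw [Nat.card_sigma, Finset.sum_congr rfl fun b _ => card_sigma_tailStarts hreg m b,
        Finset.sum_add_distrib, Finset.mul_sum, Finset.mul_sum]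

end SimpleGraph

theorem closedNbWalks_eq_circuit_sum_general {V : Type*} [Fintype V] (G : SimpleGraph V) [DecidableRel G.Adj]
    (q : ℕ) (hreg : G.IsRegularOfDegree (q + 1)) (r : ℕ) :
    (∑ a : V, closedNbWalkCount G r a) =
      (∑ a : V, circuitCount G r a) +
        (q - 1) * ∑ i ∈ Finset.Ico 1 ((r + 1) / 2),
          q ^ (i - 1) * (∑ a : V, circuitCount G (r - 2 * i) a) := by
  have hsplit : ∀ a, closedNbWalkCount G r a =
      circuitCount G r a + (G.closedNbWalkSet r a \ G.circuitSet r a).ncard := fun a =>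
    (Set.ncard_sdiff_add_ncard_of_subset (circuitSet_subset_closedNbWalkSet r a)).symm.trans
      (add_comm _ _)
  rw [Finset.sum_congr rfl fun a _ => hsplit a, Finset.sum_add_distrib]
  congr 1
  exact eq_mul_sum_Ico_of_recurrence (q - 1) q
    (fun n => ∑ a, (G.closedNbWalkSet n a \ G.circuitSet n a).ncard)
    (fun n => ∑ a, circuitCount G n a)
    (fun n hn => by simp [closedNbWalkSet_diff_circuitSet_eq_empty hn])
    (sum_ncard_diff_circuitSet_add_three hreg) r

theorem closedNbWalks_eq_circuit_sum {V : Type*} [Fintype V] (G : SimpleGraph V) [DecidableRel G.Adj]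
    (q : ℕ) (hq : 1 ≤ q) (hreg : G.IsRegularOfDegree (q + 1)) (r : ℕ) (hr : 1 ≤ r) :
    (∑ a : V, closedNbWalkCount G r a) =
      (∑ a : V, circuitCount G r a) +
        (q - 1) * ∑ i ∈ Finset.Ico 1 ((r + 1) / 2),
          q ^ (i - 1) * (∑ a : V, circuitCount G (r - 2 * i) a) :=
  closedNbWalks_eq_circuit_sum_general G q hreg r
end
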